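/- Let (Ω, 𝓕, μ) be a probability space, E a measurable space, T_rct, T_synth : Ω → Bool measurable, and W : Ω → E measurable. Suppose T_rct is independent of the pair ω ↦ (T_synth ω, W ω) under μ and μ({ω | T_rct ω = true}) = 1/2. Then, letting A = {ω | T_rct ω = T_synth ω} (which has μ(A) = 1/2 > 0), the pushforward law of W under the conditional measure μ[·|A] equals the pushforward law of W under μ: Measure.map W (ProbabilityTheory.cond μ A) = Measure.map W μ. -/

import Mathlib

open MeasureTheory ProbabilityTheory

/-!
Splitting the acceptance event according to the value `i` of `Trct`, independence gives
`μ (A ∩ W⁻¹ s) = ∑ i, μ (Trct = i) * μ (Tsynth = i, W ∈ s) = 1/2 * μ (W ∈ s)`, since both values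
of `Trct` have probability `1/2`. Taking `s = univ` shows `μ A = 1/2`, so `A` is independent
of `W`, and conditioning on an event independent of `W` does not change the law of `W`.
-/

section

open Set

variable {Ω E ι : Type*} [MeasurableSpace Ω] [MeasurableSpace E] {μ : Measure Ω}

lemma measure_preimage_eq_half_of_measure_true_eq_half [IsProbabilityMeasure μ] {X : Ω → Bool}
    (hX : Measurable X) (h : μ {ω | X ω = true} = 1 / 2) (b : Bool) :
    μ (X ⁻¹' {b}) = 1 / 2 := by
  cases b
  · have hcompl : X ⁻¹' {false} = (X ⁻¹' {true})ᶜ := by ext; simp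
    rw [hcompl, prob_compl_eq_one_sub (hX (measurableSet_singleton true))]
    change 1 - μ {ω | X ω = true} = _
    rw [h, one_div, ENNReal.one_sub_inv_two]
  · exact h

lemma tsum_measure_preimage_singleton_inter [Countable ι] [MeasurableSpace ι]
    [MeasurableSingletonClass ι] {Y : Ω → ι} (hY : Measurable Y) {t : Set Ω}
    (ht : MeasurableSet t) : ∑' i, μ (Y ⁻¹' {i} ∩ t) = μ t := by
  rw [← measure_iUnion (fun i j hij => ((disjoint_singleton.2 hij).preimage Y).mono
    inter_subset_left inter_subset_left) fun i => (hY (measurableSet_singleton i)).inter ht,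
    ← iUnion_inter, ← preimage_iUnion, iUnion_of_singleton, preimage_univ, univ_inter]

lemma ProbabilityTheory.IndepFun.measure_setOf_eq_inter_preimage [Countable ι]
    [MeasurableSpace ι] [MeasurableSingletonClass ι] {X Y : Ω → ι} {W : Ω → E}
    (hX : Measurable X) (hY : Measurable Y) (hW : Measurable W)
    (hindep : IndepFun X (fun ω => (Y ω, W ω)) μ) {c : ENNReal} (hc : ∀ i, μ (X ⁻¹' {i}) = c)
    {s : Set E} (hs : MeasurableSet s) :
    μ ({ω | X ω = Y ω} ∩ W ⁻¹' s) = c * μ (W ⁻¹' s) := by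
  have hunion : {ω | X ω = Y ω} ∩ W ⁻¹' s = ⋃ i, X ⁻¹' {i} ∩ (Y ⁻¹' {i} ∩ W ⁻¹' s) := by
    ext ω; simp [eq_comm]
  calc μ ({ω | X ω = Y ω} ∩ W ⁻¹' s)
      = ∑' i, μ (X ⁻¹' {i} ∩ (Y ⁻¹' {i} ∩ W ⁻¹' s)) := by
        refine hunion ▸ measure_iUnion (fun i j hij => ((disjoint_singleton.2 hij).preimage X).mono
          inter_subset_left inter_subset_left) fun i => (hX (measurableSet_singleton i)).inter ?_
        exact (hY (measurableSet_singleton i)).inter (hW hs)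
    _ = ∑' i, c * μ (Y ⁻¹' {i} ∩ W ⁻¹' s) := by
        congr 1; ext i
        rw [← hc i, ← mk_preimage_prod]
        exact hindep.measure_inter_preimage_eq_mul _ _ (measurableSet_singleton i)
          ((measurableSet_singleton i).prod hs)
    _ = c * μ (W ⁻¹' s) := by
        rw [ENNReal.tsum_mul_left, tsum_measure_preimage_singleton_inter hY (hW hs)]

lemma map_cond_eq_map_of_measure_inter_preimage [IsFiniteMeasure μ] {A : Set Ω} {W : Ω → E}
    (hA : MeasurableSet A) (hA0 : μ A ≠ 0) (hW : Measurable W)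
    (h : ∀ s, MeasurableSet s → μ (A ∩ W ⁻¹' s) = μ A * μ (W ⁻¹' s)) :
    (μ[|A]).map W = μ.map W := by
  ext s hs
  rw [Measure.map_apply hW hs, Measure.map_apply hW hs, cond_apply hA, h s hs, ← mul_assoc,
    ENNReal.inv_mul_cancel hA0 (measure_ne_top μ A), one_mul]

end

theorem map_cond_acceptance_eq_map {Ω E : Type*} [MeasurableSpace Ω] [MeasurableSpace E]
    (μ : Measure Ω) [IsProbabilityMeasure μ]
    (Trct Tsynth : Ω → Bool) (W : Ω → E)
    (hTrct : Measurable Trct) (hTsynth : Measurable Tsynth) (hW : Measurable W)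
    (hindep : IndepFun Trct (fun ω => (Tsynth ω, W ω)) μ)
    (hbal : μ {ω | Trct ω = true} = 1/2) :
    Measure.map W (ProbabilityTheory.cond μ {ω | Trct ω = Tsynth ω})
      = Measure.map W μ := by
  have hacc (s : Set E) (hs : MeasurableSet s) :
      μ ({ω | Trct ω = Tsynth ω} ∩ W ⁻¹' s) = 1 / 2 * μ (W ⁻¹' s) :=
    hindep.measure_setOf_eq_inter_preimage hTrct hTsynth hW
      (measure_preimage_eq_half_of_measure_true_eq_half hTrct hbal) hs
  have hA : μ {ω | Trct ω = Tsynth ω} = 1 / 2 := by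
    simpa using hacc Set.univ MeasurableSet.univ
  refine map_cond_eq_map_of_measure_inter_preimage (measurableSet_eq_fun hTrct hTsynth)
    (by simp [hA]) hW fun s hs => ?_
  rw [hacc s hs, hA]
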